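/- Playfair's Axiom (through a point not on a line passes at most one parallel) is equivalent to Euclid's Fifth Postulate (if a transversal falling on two lines makes the interior angles on one side sum to less than two right angles, the two lines meet on that side) in any Hilbert plane. -/

import Mathlib

/-- A Hilbert plane: a model of Hilbert's axioms of incidence, betweenness and
congruence for plane geometry (congruence rendered via a real-valued segment
length and angle measure). -/
structure HilbertPlane where
  Point : Type
  Line : Type
  onLine : Point → Line → Prop
  btw : Point → Point → Point → Prop
  dist : Point → Point → ℝ
  angle : Point → Point → Point → ℝ
  line_exists : ∀ P Q : Point, P ≠ Q → ∃ l : Line, onLine P l ∧ onLine Q l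
  line_unique : ∀ (P Q : Point) (l m : Line), P ≠ Q → onLine P l → onLine Q l →
    onLine P m → onLine Q m → l = m
  line_two_points : ∀ l : Line, ∃ P Q : Point, P ≠ Q ∧ onLine P l ∧ onLine Q l
  exists_noncollinear : ∃ P Q R : Point,
    ∀ l : Line, ¬ (onLine P l ∧ onLine Q l ∧ onLine R l)
  btw_symm : ∀ A B C, btw A B C → btw C B A
  btw_ne : ∀ A B C, btw A B C → A ≠ B ∧ B ≠ C ∧ A ≠ C
  btw_collinear : ∀ A B C, btw A B C → ∃ l, onLine A l ∧ onLine B l ∧ onLine C l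
  btw_extend : ∀ A B, A ≠ B → ∃ C, btw A B C
  btw_not_rotate : ∀ A B C, btw A B C → ¬ btw B A C
  pasch : ∀ (A B C : Point) (l : Line),
    (∀ m : Line, ¬ (onLine A m ∧ onLine B m ∧ onLine C m)) →
    ¬ onLine A l → ¬ onLine B l → ¬ onLine C l →
    (∃ P, onLine P l ∧ btw A P B) →
    (∃ Q, onLine Q l ∧ btw A Q C) ∨ (∃ Q, onLine Q l ∧ btw B Q C)
  dist_pos : ∀ A B, A ≠ B → 0 < dist A B
  dist_self : ∀ A, dist A A = 0
  dist_symm : ∀ A B, dist A B = dist B A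
  dist_btw_add : ∀ A B C, btw A B C → dist A B + dist B C = dist A C
  seg_construct : ∀ A B : Point, A ≠ B → ∀ r : ℝ, 0 < r →
    ∃ C, (C = B ∨ btw A C B ∨ btw A B C) ∧ dist A C = r
  angle_symm : ∀ A B C, angle A B C = angle C B A
  angle_mem : ∀ A B C, A ≠ B → C ≠ B → angle A B C ∈ Set.Icc (0:ℝ) Real.pi
  angle_pos : ∀ A B C, (∀ l, ¬ (onLine A l ∧ onLine B l ∧ onLine C l)) →
    0 < angle A B C
  angle_straight : ∀ A B C, btw A B C → angle A B C = Real.pi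
  angle_ray_invariant : ∀ A B C B' C' : Point,
    (B' = B ∨ btw A B' B ∨ btw A B B') →
    (C' = C ∨ btw A C' C ∨ btw A C C') →
    angle B A C = angle B' A C'
  angle_add : ∀ A B C D : Point, A ≠ B → A ≠ C → A ≠ D →
    (∀ l : Line, onLine A l → onLine B l →
      ¬ onLine D l ∧ ¬ onLine C l ∧ ¬ ∃ Z, onLine Z l ∧ btw D Z C) →
    (∀ l : Line, onLine A l → onLine C l →
      ¬ onLine D l ∧ ¬ onLine B l ∧ ¬ ∃ Z, onLine Z l ∧ btw D Z B) →
    angle B A D + angle D A C = angle B A C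
  angle_construct : ∀ θ : ℝ, 0 < θ → θ < Real.pi →
    ∀ (A B P : Point) (l : Line), A ≠ B → onLine A l → onLine B l → ¬ onLine P l →
    ∃ C, ¬ onLine C l ∧ (¬ ∃ Z, onLine Z l ∧ btw C Z P) ∧ angle C A B = θ
  sas : ∀ A B C A' B' C' : Point,
    (∀ l, ¬ (onLine A l ∧ onLine B l ∧ onLine C l)) →
    (∀ l, ¬ (onLine A' l ∧ onLine B' l ∧ onLine C' l)) →
    dist A B = dist A' B' → dist A C = dist A' C' →
    angle B A C = angle B' A' C' →
    dist B C = dist B' C' ∧ angle A B C = angle A' B' C' ∧ angle A C B = angle A' C' B'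

namespace HilbertPlane

variable (H : HilbertPlane)

/-- Three points are collinear. -/
def Collinear (A B C : H.Point) : Prop :=
  ∃ l : H.Line, H.onLine A l ∧ H.onLine B l ∧ H.onLine C l

/-- `X` and `Y` lie (strictly) on the same side of the line `l`. -/
def SameSide (l : H.Line) (X Y : H.Point) : Prop :=
  ¬ H.onLine X l ∧ ¬ H.onLine Y l ∧ ¬ ∃ Z, H.onLine Z l ∧ H.btw X Z Y

/-- `X` and `Y` lie on opposite sides of the line `l`. -/
def OppSide (l : H.Line) (X Y : H.Point) : Prop :=
  ¬ H.onLine X l ∧ ¬ H.onLine Y l ∧ ∃ Z, H.onLine Z l ∧ H.btw X Z Y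

/-- `X` lies on the ray from `A` through `B`. -/
def OnRay (A B X : H.Point) : Prop :=
  X = B ∨ H.btw A X B ∨ H.btw A B X

/-- The ray from `A` through `B` meets the line `a`. -/
def RayMeets (A B : H.Point) (a : H.Line) : Prop :=
  ∃ X, H.OnRay A B X ∧ H.onLine X a

/-- Two lines meet. -/
def LinesMeet (a b : H.Line) : Prop := ∃ X, H.onLine X a ∧ H.onLine X b

/-- `Q` is the foot of the perpendicular from `P` to the line `a`. -/
def FootPerp (P Q : H.Point) (a : H.Line) : Prop :=
  H.onLine Q a ∧ ∀ R, H.onLine R a → R ≠ Q → H.angle P Q R = Real.pi / 2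

/-- `D` lies strictly inside the angle `∠ X P Y`. -/
def InsideAngle (P X Y D : H.Point) : Prop :=
  (∀ l, H.onLine P l → H.onLine X l → H.SameSide l D Y) ∧
  (∀ l, H.onLine P l → H.onLine Y l → H.SameSide l D X)

/-- Lobachevsky's axiom: through any point outside a line there are two rays, not
on one line, not meeting the line, such that every ray inside the angle they form
meets the line. -/
def Lobachevsky : Prop :=
  ∀ (a : H.Line) (A : H.Point), ¬ H.onLine A a →
    ∃ B C : H.Point, ¬ H.Collinear B A C ∧
      ¬ H.RayMeets A B a ∧ ¬ H.RayMeets A C a ∧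
      ∀ D, H.InsideAngle A B C D → H.RayMeets A D a

/-- The ray from `P` through `B` is a limiting parallel ray to the line `a`,
where `Q` is the foot of the perpendicular from `P` to `a`: it does not meet `a`,
but every ray from `P` strictly inside the angle `∠ B P Q` meets `a`. -/
def LimitingParallelRay (a : H.Line) (P Q B : H.Point) : Prop :=
  H.FootPerp P Q a ∧ ¬ H.RayMeets P B a ∧
    ∀ D, H.InsideAngle P B Q D → H.RayMeets P D a

/-- The Archimedean axiom for segments. -/
def ArchimedeanAx : Prop :=
  ∀ A B C D : H.Point, A ≠ B → ∃ n : ℕ, H.dist C D < n * H.dist A B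

end HilbertPlane

namespace HilbertPlane

/-- Playfair's axiom: through a point not on a line passes at most one line not
meeting it. -/
def PlayfairAx (H : HilbertPlane) : Prop :=
  ∀ (l : H.Line) (A : H.Point), ¬ H.onLine A l →
    ∀ m n : H.Line, H.onLine A m → H.onLine A n →
      ¬ H.LinesMeet m l → ¬ H.LinesMeet n l → m = n

/-- Euclid's Fifth Postulate: if a transversal `c` falls on lines `a`, `b` at
`A`, `B` and makes the interior angles on one side (towards points `P ∈ a`,
`Q ∈ b` on the same side of `c`) sum to less than two right angles, then `a`
and `b` meet on that side. -/
def EuclidFifth (H : HilbertPlane) : Prop :=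
  ∀ (a b c : H.Line) (A B P Q : H.Point), A ≠ B →
    H.onLine A a → H.onLine A c → H.onLine B b → H.onLine B c →
    H.onLine P a → H.onLine Q b → H.SameSide c P Q →
    H.angle P A B + H.angle Q B A < Real.pi →
    ∃ X, H.onLine X a ∧ H.onLine X b ∧ H.SameSide c X P

end HilbertPlane

/-!
Euclid's postulate gives Playfair's axiom: a line through `A` missing `l` has interior angle
sums at least `π` on both sides of a transversal `AB`, and these sums add up to `2π`; so its
angle with `AB` is forced, and two rays on one side of `AB` making equal angles with it coincide.

Conversely, if the interior angles at `A` and `B` sum to less than `π`, the line through `A`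
making the angle `π - ∠QBA` with `AB` misses `b`, because two angles of a triangle sum to less
than `π` (exterior angle theorem). By Playfair's axiom the line `a`, being different, meets `b`,
and by the same bound it does so on the side of `P` and `Q`.
-/

namespace HilbertPlane

variable {H : HilbertPlane} {A B C D E F P Q R U V W X Y Z : H.Point}
  {a b c e k l m n : H.Line}

theorem line_eq_of_onLine (hPQ : P ≠ Q) (hPl : H.onLine P l) (hQl : H.onLine Q l)
    (hPm : H.onLine P m) (hQm : H.onLine Q m) : l = m :=
  H.line_unique P Q l m hPQ hPl hQl hPm hQm

theorem eq_of_onLine_of_ne (hlm : l ≠ m) (hPl : H.onLine P l) (hPm : H.onLine P m)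
    (hQl : H.onLine Q l) (hQm : H.onLine Q m) : P = Q :=
  by_contra fun hPQ => hlm (line_eq_of_onLine hPQ hPl hQl hPm hQm)

theorem not_onLine_of_ne (hlm : l ≠ m) (hPl : H.onLine P l) (hPm : H.onLine P m)
    (hQl : H.onLine Q l) (hQP : Q ≠ P) : ¬ H.onLine Q m :=
  fun hQm => hQP (eq_of_onLine_of_ne hlm hQl hQm hPl hPm)

theorem exists_not_onLine (l : H.Line) : ∃ P, ¬ H.onLine P l := by
  obtain ⟨P, Q, R, h⟩ := H.exists_noncollinear
  by_contra! hl
  exact h l ⟨hl P, hl Q, hl R⟩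

theorem exists_onLine_ne (l : H.Line) (A : H.Point) : ∃ P, H.onLine P l ∧ P ≠ A := by
  obtain ⟨P, Q, hPQ, hPl, hQl⟩ := H.line_two_points l
  by_cases hPA : P = A
  · exact ⟨Q, hQl, fun hQA => hPQ (hPA.trans hQA.symm)⟩
  · exact ⟨P, hPl, hPA⟩

theorem noncollinear_of_not_onLine_left (hBl : H.onLine B l) (hCl : H.onLine C l)
    (hBC : B ≠ C) (hA : ¬ H.onLine A l) :
    ∀ n, ¬ (H.onLine A n ∧ H.onLine B n ∧ H.onLine C n) :=
  fun _ ⟨hAn, hBn, hCn⟩ => hA (line_eq_of_onLine hBC hBn hCn hBl hCl ▸ hAn)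

theorem noncollinear_of_not_onLine_right (hAl : H.onLine A l) (hBl : H.onLine B l)
    (hAB : A ≠ B) (hC : ¬ H.onLine C l) :
    ∀ n, ¬ (H.onLine A n ∧ H.onLine B n ∧ H.onLine C n) :=
  fun _ ⟨hAn, hBn, hCn⟩ => hC (line_eq_of_onLine hAB hAn hBn hAl hBl ▸ hCn)

theorem angle_pos_of_not_onLine (hBl : H.onLine B l) (hCl : H.onLine C l) (hBC : B ≠ C)
    (hA : ¬ H.onLine A l) : 0 < H.angle A B C :=
  H.angle_pos A B C (noncollinear_of_not_onLine_left hBl hCl hBC hA)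

theorem btw.symm (h : H.btw A B C) : H.btw C B A := H.btw_symm A B C h

theorem btw.left_ne (h : H.btw A B C) : A ≠ B := (H.btw_ne A B C h).1

theorem btw.ne_right (h : H.btw A B C) : B ≠ C := (H.btw_ne A B C h).2.1

theorem btw.left_ne_right (h : H.btw A B C) : A ≠ C := (H.btw_ne A B C h).2.2

theorem btw.not_btw_left (h : H.btw A B C) : ¬ H.btw B A C := H.btw_not_rotate A B C h

theorem btw.not_btw_right (h : H.btw A B C) : ¬ H.btw A C B :=
  fun h' => H.btw_not_rotate B C A h'.symm h.symm

theorem btw.onLine_mid (h : H.btw A B C) (hAl : H.onLine A l) (hCl : H.onLine C l) :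
    H.onLine B l := by
  obtain ⟨m, hAm, hBm, hCm⟩ := H.btw_collinear A B C h
  exact line_eq_of_onLine h.left_ne_right hAm hCm hAl hCl ▸ hBm

theorem btw.onLine_right (h : H.btw A B C) (hAl : H.onLine A l) (hBl : H.onLine B l) :
    H.onLine C l := by
  obtain ⟨m, hAm, hBm, hCm⟩ := H.btw_collinear A B C h
  exact line_eq_of_onLine h.left_ne hAm hBm hAl hBl ▸ hCm

theorem btw_of_exists_btw (hkn : k ≠ n) (hXk : H.onLine X k) (hXn : H.onLine X n)
    (hUn : H.onLine U n) (hVn : H.onLine V n) (h : ∃ Z, H.onLine Z k ∧ H.btw U Z V) :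
    H.btw U X V := by
  obtain ⟨Z, hZk, hUZV⟩ := h
  rwa [eq_of_onLine_of_ne hkn hZk (hUZV.onLine_mid hUn hVn) hXk hXn] at hUZV

theorem exists_midpoint (hAB : A ≠ B) : ∃ M, H.btw A M B ∧ H.dist A M = H.dist M B := by
  have hpos := H.dist_pos A B hAB
  obtain ⟨M, rfl | hAMB | hABM, hAM⟩ :=
    H.seg_construct A B hAB (H.dist A B / 2) (by linarith)
  · linarith
  · exact ⟨M, hAMB, by linarith [H.dist_btw_add A M B hAMB]⟩
  · linarith [H.dist_btw_add A B M hABM, H.dist_pos B M hABM.ne_right]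

theorem exists_btw_of_not_btw (hXl : H.onLine X l) (hZl : H.onLine Z l) (hWl : H.onLine W l)
    (hWk : H.onLine W k) (hlk : l ≠ k) (hXW : X ≠ W) (hZW : Z ≠ W) (hXZ : X ≠ Z)
    (hY : ¬ H.onLine Y l) (hYk : ¬ H.onLine Y k) (hXY : ∃ P, H.onLine P k ∧ H.btw X P Y)
    (hXWZ : ¬ H.btw X W Z) : ∃ P, H.onLine P k ∧ H.btw Y P Z :=
  (H.pasch X Y Z k (fun n ⟨hXn, hYn, hZn⟩ =>
    noncollinear_of_not_onLine_right hXl hZl hXZ hY n ⟨hXn, hZn, hYn⟩)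
    (not_onLine_of_ne hlk hWl hWk hXl hXW) hYk (not_onLine_of_ne hlk hWl hWk hZl hZW)
    hXY).resolve_left fun h => hXWZ (btw_of_exists_btw hlk.symm hWk hWl hXl hZl h)

/-- Hilbert's Theorem 4. With `a`, `b`, `c` the lines joining a point `D` off `l` to `A`, `B`,
`C`, Pasch's axiom is applied to the triangles `AEC`, `EAF`, `AFB`, `BFC` in turn. -/
theorem btw_total (hAl : H.onLine A l) (hBl : H.onLine B l) (hCl : H.onLine C l)
    (hAB : A ≠ B) (hBC : B ≠ C) (hAC : A ≠ C) :
    H.btw A B C ∨ H.btw B A C ∨ H.btw A C B := by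
  by_contra! h
  obtain ⟨hABC, hBAC, hACB⟩ := h
  obtain ⟨D, hD⟩ := exists_not_onLine l
  obtain ⟨E, hADE⟩ := H.btw_extend A D fun h => hD (h ▸ hAl)
  obtain ⟨a, hAa, hDa⟩ := H.line_exists A D hADE.left_ne
  obtain ⟨b, hBb, hDb⟩ := H.line_exists B D fun h => hD (h ▸ hBl)
  obtain ⟨c, hCc, hDc⟩ := H.line_exists C D fun h => hD (h ▸ hCl)
  have hEa : H.onLine E a := hADE.onLine_right hAa hDa
  have hla : l ≠ a := fun h => hD (h ▸ hDa)
  have hlb : l ≠ b := fun h => hD (h ▸ hDb)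
  have hlc : l ≠ c := fun h => hD (h ▸ hDc)
  have hAc := not_onLine_of_ne hlc hCl hCc hAl hAC
  have hEl := not_onLine_of_ne hla.symm hAa hAl hEa hADE.left_ne_right.symm
  have hAb := not_onLine_of_ne hlb hBl hBb hAl hAB
  have hEb := not_onLine_of_ne (fun h => hAb (h ▸ hAa) : a ≠ b) hDa hDb hEa hADE.ne_right.symm
  obtain ⟨F, hFb, hEFC⟩ :=
    exists_btw_of_not_btw hAl hCl hBl hBb hlb hAB hBC.symm hAC hEl hEb ⟨D, hDb, hADE⟩ hABC
  obtain ⟨e, hEe, hCe⟩ := H.line_exists E C hEFC.left_ne_right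
  have hFe : H.onLine F e := hEFC.onLine_mid hEe hCe
  have hEc := not_onLine_of_ne (fun h => hAc (h ▸ hAa) : a ≠ c) hDa hDc hEa hADE.ne_right.symm
  have hec : e ≠ c := fun h => hEc (h ▸ hEe)
  have hAe : ¬ H.onLine A e := fun h => hEl (line_eq_of_onLine hAC h hCe hAl hCl ▸ hEe)
  obtain ⟨G, hGc, hAGF⟩ := exists_btw_of_not_btw hEe hFe hCe hCc hec hEFC.left_ne_right
    hEFC.ne_right hEFC.left_ne hAe hAc ⟨D, hDc, hADE.symm⟩ hEFC.not_btw_right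
  have hFB : F ≠ B := by
    rintro rfl
    exact hACB (btw_of_exists_btw hlc.symm hCc hCl hAl hBl ⟨G, hGc, hAGF⟩)
  have hFl := not_onLine_of_ne hlb.symm hBb hBl hFb hFB
  have hFc := not_onLine_of_ne hec hCe hCc hFe hEFC.ne_right
  have hBc := not_onLine_of_ne hlc hCl hCc hBl hBC
  have hFDB : H.btw F D B := btw_of_exists_btw (fun h : c = b => hBc (h ▸ hBb)) hDc hDb hFb hBb
    (exists_btw_of_not_btw hAl hBl hCl hCc hlc hAC hBC hAB hFl hFc ⟨G, hGc, hAGF⟩ hACB)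
  have hCa := not_onLine_of_ne hla hAl hAa hCl hAC.symm
  have hFa : ¬ H.onLine F a := fun h => hCa (hEFC.onLine_right hEa h)
  exact hEFC.not_btw_left (btw_of_exists_btw (fun h : a = e => hCa (h ▸ hCe)) hEa hEe hFe hCe
    (exists_btw_of_not_btw hBl hCl hAl hAa hla hAB.symm hAC.symm hBC hFl hFa
      ⟨D, hDa, hFDB.symm⟩ hBAC))

/-- A line `m` through `C` crosses `AD`; Pasch's axiom in the triangles `ADF` and `FDB` moves
the crossing to `DF` and then to `DB`, for a point `F` such that `m` crosses neither `AF`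
nor `FB`. -/
theorem btw.replace_left (hACD : H.btw A C D) (hAl : H.onLine A l) (hBl : H.onLine B l)
    (hCl : H.onLine C l) (hAB : A ≠ B) (hBC : B ≠ C) (hACB : ¬ H.btw A C B) :
    H.btw B C D := by
  have hDl : H.onLine D l := hACD.onLine_right hAl hCl
  obtain ⟨E, hE⟩ := exists_not_onLine l
  obtain ⟨m, hCm, hEm⟩ := H.line_exists C E fun h => hE (h ▸ hCl)
  have hlm : l ≠ m := fun h => hE (h ▸ hEm)
  have hAm := not_onLine_of_ne hlm hCl hCm hAl hACD.left_ne
  have hBm := not_onLine_of_ne hlm hCl hCm hBl hBC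
  have hDm := not_onLine_of_ne hlm hCl hCm hDl hACD.ne_right.symm
  obtain ⟨F, hAFE, -⟩ := exists_midpoint fun h : A = E => hE (h ▸ hAl)
  obtain ⟨e, hAe, hEe⟩ := H.line_exists A E hAFE.left_ne_right
  have hFe : H.onLine F e := hAFE.onLine_mid hAe hEe
  have hle : l ≠ e := fun h => hE (h ▸ hEe)
  have hme : m ≠ e := fun h => hAm (h ▸ hAe)
  have hFl := not_onLine_of_ne hle.symm hAe hAl hFe hAFE.left_ne.symm
  have hFm := not_onLine_of_ne hme.symm hEe hEm hFe hAFE.ne_right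
  have hAF : ¬ ∃ Z, H.onLine Z m ∧ H.btw A Z F := fun h =>
    hAFE.not_btw_right (btw_of_exists_btw hme hEm hEe hAe hFe h)
  have hBF : ¬ ∃ Z, H.onLine Z m ∧ H.btw F Z B := fun h =>
    (H.pasch F B A m (noncollinear_of_not_onLine_left hBl hAl hAB.symm hFl) hFm hBm hAm
      h).elim (fun ⟨Z, hZm, hFZA⟩ => hAF ⟨Z, hZm, hFZA.symm⟩)
      fun h => hACB (btw_of_exists_btw hlm.symm hCm hCl hAl hBl
        (h.imp fun _ ⟨hZm, hBZA⟩ => ⟨hZm, hBZA.symm⟩))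
  have hDF : ∃ Z, H.onLine Z m ∧ H.btw D Z F :=
    (H.pasch A D F m (noncollinear_of_not_onLine_right hAl hDl hACD.left_ne_right hFl) hAm hDm
      hFm ⟨C, hCm, hACD⟩).resolve_left hAF
  have hDB : ∃ Z, H.onLine Z m ∧ H.btw D Z B :=
    (H.pasch F D B m (noncollinear_of_not_onLine_left hDl hBl (fun h => hACB (h ▸ hACD)) hFl)
      hFm hDm hBm (hDF.imp fun _ ⟨hZm, hDZF⟩ => ⟨hZm, hDZF.symm⟩)).resolve_left hBF
  exact (btw_of_exists_btw hlm.symm hCm hCl hDl hBl hDB).symm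

theorem btw.trans_left_right (hACD : H.btw A C D) (hABC : H.btw A B C) : H.btw B C D := by
  obtain ⟨l, hAl, hBl, hCl⟩ := H.btw_collinear A B C hABC
  exact hACD.replace_left hAl hBl hCl hABC.left_ne hABC.ne_right hABC.not_btw_right

theorem btw.trans_btw (hABC : H.btw A B C) (hBCD : H.btw B C D) : H.btw A C D := by
  obtain ⟨l, hAl, hBl, hCl⟩ := H.btw_collinear A B C hABC
  exact hBCD.replace_left hBl hAl hCl hABC.left_ne.symm hABC.left_ne_right
    fun h => hABC.not_btw_right h.symm

theorem exists_btw_dist_eq (hBE : B ≠ E) {r : ℝ} (hr : 0 < r) :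
    ∃ F, H.btw B E F ∧ H.dist E F = r := by
  obtain ⟨G, hBEG⟩ := H.btw_extend B E hBE
  obtain ⟨F, rfl | hEFG | hEGF, hEF⟩ := H.seg_construct E G hBEG.ne_right r hr
  · exact ⟨F, hBEG, hEF⟩
  · exact ⟨F, (hBEG.symm.trans_left_right hEFG.symm).symm, hEF⟩
  · exact ⟨F, (hEGF.symm.trans_btw hBEG.symm).symm, hEF⟩

theorem SameSide.symm (h : H.SameSide l X Y) : H.SameSide l Y X :=
  ⟨h.2.1, h.1, fun ⟨Z, hZl, hYZX⟩ => h.2.2 ⟨Z, hZl, hYZX.symm⟩⟩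

theorem OppSide.symm (h : H.OppSide l X Y) : H.OppSide l Y X :=
  ⟨h.2.1, h.1, h.2.2.imp fun _ ⟨hZl, hXZY⟩ => ⟨hZl, hXZY.symm⟩⟩

theorem sameSide_or_oppSide (hX : ¬ H.onLine X l) (hY : ¬ H.onLine Y l) :
    H.SameSide l X Y ∨ H.OppSide l X Y :=
  (em _).symm.imp (fun h => ⟨hX, hY, h⟩) fun h => ⟨hX, hY, h⟩

theorem sameSide_of_btw (hCl : H.onLine C l) (hD : ¬ H.onLine D l) (h : H.btw C Z D) :
    H.SameSide l Z D := by
  obtain ⟨m, hCm, hDm⟩ := H.line_exists C D h.left_ne_right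
  have hlm : l ≠ m := fun h => hD (h ▸ hDm)
  have hZm : H.onLine Z m := h.onLine_mid hCm hDm
  refine ⟨not_onLine_of_ne hlm.symm hCm hCl hZm h.left_ne.symm, hD, fun h' => ?_⟩
  exact h.not_btw_left (btw_of_exists_btw hlm hCl hCm hZm hDm h')

theorem OppSide.oppSide_or_oppSide (h : H.OppSide l X Z) (hY : ¬ H.onLine Y l) :
    H.OppSide l X Y ∨ H.OppSide l Y Z := by
  obtain ⟨hX, hZ, W, hWl, hXWZ⟩ := h
  obtain ⟨m, hXm, hZm⟩ := H.line_exists X Z hXWZ.left_ne_right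
  by_cases hYm : H.onLine Y m
  · rcases eq_or_ne X Y with rfl | hXY
    · exact Or.inr ⟨hX, hZ, W, hWl, hXWZ⟩
    have hWY : W ≠ Y := fun h => hY (h ▸ hWl)
    rcases btw_total hXm (hXWZ.onLine_mid hXm hZm) hYm hXWZ.left_ne hWY hXY with h | h | h
    · exact Or.inl ⟨hX, hY, W, hWl, h⟩
    · exact Or.inr ⟨hY, hZ, W, hWl, h.symm.trans_btw hXWZ⟩
    · exact Or.inr ⟨hY, hZ, W, hWl, hXWZ.trans_left_right h⟩
  · refine (H.pasch X Z Y l (noncollinear_of_not_onLine_right hXm hZm hXWZ.left_ne_right hYm)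
      hX hZ hY ⟨W, hWl, hXWZ⟩).imp (fun h => ⟨hX, hY, h⟩) fun h => ⟨hY, hZ, ?_⟩
    exact h.imp fun _ ⟨hVl, hZVY⟩ => ⟨hVl, hZVY.symm⟩

theorem SameSide.trans (h₁ : H.SameSide l X Y) (h₂ : H.SameSide l Y Z) :
    H.SameSide l X Z :=
  ⟨h₁.1, h₂.2.1, fun h => (OppSide.oppSide_or_oppSide ⟨h₁.1, h₂.2.1, h⟩ h₁.2.1).elim
    (fun h' => h₁.2.2 h'.2.2) fun h' => h₂.2.2 h'.2.2⟩

theorem SameSide.trans_oppSide (h₁ : H.SameSide l X Y) (h₂ : H.OppSide l Y Z) :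
    H.OppSide l X Z :=
  (sameSide_or_oppSide h₁.1 h₂.2.1).resolve_left fun h => (h₁.symm.trans h).2.2 h₂.2.2

theorem sameSide_of_btw_of_btw (hXm : H.onLine X m) (hZm : H.onLine Z m)
    (hYm : ¬ H.onLine Y m) (hXPY : H.btw X P Y) (hYQZ : H.btw Y Q Z) : H.SameSide m P Q :=
  (sameSide_of_btw hXm hYm hXPY).trans (sameSide_of_btw hZm hYm hYQZ.symm).symm

/-- The middle one of the three points lies on a side line, and the other two lie on the same
side of it as the opposite vertex. -/
theorem not_collinear_of_btw_sides (hXm : H.onLine X m) (hZm : H.onLine Z m)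
    (hYm : ¬ H.onLine Y m) (hXPY : H.btw X P Y) (hYQZ : H.btw Y Q Z) (hXRZ : H.btw X R Z) :
    ¬ H.Collinear P Q R := by
  rintro ⟨l, hPl, hQl, hRl⟩
  obtain ⟨n₁, hXn₁, hYn₁⟩ := H.line_exists X Y hXPY.left_ne_right
  obtain ⟨n₂, hYn₂, hZn₂⟩ := H.line_exists Y Z hYQZ.left_ne_right
  have hPn₁ := hXPY.onLine_mid hXn₁ hYn₁
  have hQn₂ := hYQZ.onLine_mid hYn₂ hZn₂
  have hRm := hXRZ.onLine_mid hXm hZm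
  have hZn₁ : ¬ H.onLine Z n₁ := fun h =>
    hYm (line_eq_of_onLine hXRZ.left_ne_right hXn₁ h hXm hZm ▸ hYn₁)
  have hXn₂ : ¬ H.onLine X n₂ := fun h =>
    hYm (line_eq_of_onLine hXRZ.left_ne_right h hZn₂ hXm hZm ▸ hYn₂)
  have hn₁n₂ : n₁ ≠ n₂ := fun e => hXn₂ (e ▸ hXn₁)
  have hn₁m : n₁ ≠ m := fun e => hYm (e ▸ hYn₁)
  have hn₂m : n₂ ≠ m := fun e => hXn₂ (e ▸ hXm)
  have hPQ : P ≠ Q := fun h =>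
    hXPY.ne_right (eq_of_onLine_of_ne hn₁n₂ hPn₁ (h ▸ hQn₂) hYn₁ hYn₂)
  have hPR : P ≠ R := fun h =>
    hXPY.left_ne (eq_of_onLine_of_ne hn₁m hXn₁ hXm hPn₁ (h ▸ hRm))
  have hQR : Q ≠ R := fun h =>
    hYQZ.ne_right (eq_of_onLine_of_ne hn₂m hQn₂ (h ▸ hRm) hZn₂ hZm)
  rcases btw_total hPl hRl hQl hPR hQR.symm hPQ with h | h | h
  · exact (sameSide_of_btw_of_btw hXm hZm hYm hXPY hYQZ).2.2 ⟨R, hRm, h⟩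
  · exact (sameSide_of_btw_of_btw hXn₁ hYn₁ hZn₁ hXRZ hYQZ.symm).2.2 ⟨P, hPn₁, h⟩
  · exact (sameSide_of_btw_of_btw hYn₂ hZn₂ hXn₂ hXPY.symm hXRZ).2.2 ⟨Q, hQn₂, h⟩

theorem not_btw_of_btw_of_btw (hXRY : H.btw X R Y) (hYRZ : H.btw Y R Z) : ¬ H.btw X R Z := by
  intro hXRZ
  obtain ⟨m, hXm, hRm, hYm⟩ := H.btw_collinear X R Y hXRY
  have hZm := hYRZ.onLine_right hYm hRm
  have hXY := H.dist_btw_add X R Y hXRY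
  have hYZ := H.dist_btw_add Y R Z hYRZ
  have hXZ := H.dist_btw_add X R Z hXRZ
  rcases btw_total hXm hYm hZm hXRY.left_ne_right hYRZ.left_ne_right hXRZ.left_ne_right
    with h | h | h <;>
  linarith [H.dist_btw_add _ _ _ h, H.dist_pos X R hXRY.left_ne, H.dist_pos R Y hXRY.ne_right,
    H.dist_pos R Z hYRZ.ne_right, H.dist_symm X Y, H.dist_symm Y Z, H.dist_symm R Y]

theorem OppSide.trans (h₁ : H.OppSide l X Y) (h₂ : H.OppSide l Y Z) : H.SameSide l X Z := by
  obtain ⟨hX, hY, P, hPl, hXPY⟩ := h₁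
  obtain ⟨-, hZ, Q, hQl, hYQZ⟩ := h₂
  refine ⟨hX, hZ, fun ⟨R, hRl, hXRZ⟩ => ?_⟩
  obtain ⟨m, hXm, hZm⟩ := H.line_exists X Z hXRZ.left_ne_right
  by_cases hYm : H.onLine Y m
  · have hlm : l ≠ m := fun h => hX (h ▸ hXm)
    have hRm := hXRZ.onLine_mid hXm hZm
    obtain rfl := eq_of_onLine_of_ne hlm hPl (hXPY.onLine_mid hXm hYm) hRl hRm
    obtain rfl := eq_of_onLine_of_ne hlm hQl (hYQZ.onLine_mid hYm hZm) hRl hRm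
    exact not_btw_of_btw_of_btw hXPY hYQZ hXRZ
  · exact not_collinear_of_btw_sides hXm hZm hYm hXPY hYQZ hXRZ ⟨l, hPl, hQl, hRl⟩

theorem sameSide_of_onRay (hAl : H.onLine A l) (hB : ¬ H.onLine B l) (h : H.OnRay A B X) :
    H.SameSide l B X := by
  have hAB : A ≠ B := fun h => hB (h ▸ hAl)
  obtain ⟨m, hAm, hBm⟩ := H.line_exists A B hAB
  rcases h with rfl | hAXB | hABX
  · exact ⟨hB, hB, fun ⟨_, _, hXZX⟩ => hXZX.left_ne_right rfl⟩
  · exact (sameSide_of_btw hAl hB hAXB).symm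
  · exact sameSide_of_btw hAl (not_onLine_of_ne (fun h => hB (h ▸ hBm)) hAm hAl
      (hABX.onLine_right hAm hBm) hABX.left_ne_right.symm) hABX

theorem onRay_of_sameSide (hAl : H.onLine A l) (hAm : H.onLine A m)
    (hBm : H.onLine B m) (hXm : H.onLine X m) (h : H.SameSide l B X) : H.OnRay A B X := by
  obtain ⟨hB, hX, hBX⟩ := h
  rcases eq_or_ne X B with hXB | hXB
  · exact Or.inl hXB
  rcases btw_total hBm hAm hXm (fun h => hB (h ▸ hAl)) (fun h => hX (h ▸ hAl)) hXB.symm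
    with h | h | h
  · exact absurd ⟨A, hAl, h⟩ hBX
  · exact Or.inr (Or.inr h)
  · exact Or.inr (Or.inl h.symm)

theorem OnRay.onLine (h : H.OnRay A B X) (hAl : H.onLine A l) (hBl : H.onLine B l) :
    H.onLine X l := by
  rcases h with rfl | hAXB | hABX
  exacts [hBl, hAXB.onLine_mid hAl hBl, hABX.onLine_right hAl hBl]

theorem angle_eq_of_onRay_left (h : H.OnRay A B X) : H.angle B A C = H.angle X A C :=
  H.angle_ray_invariant A B C X C h (Or.inl rfl)

theorem angle_eq_of_onRay_right (h : H.OnRay A C X) : H.angle B A C = H.angle B A X :=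
  H.angle_ray_invariant A B C B X (Or.inl rfl) h

theorem angle_add_of_sameSide (hAl : H.onLine A l) (hBl : H.onLine B l) (hAm : H.onLine A m)
    (hCm : H.onLine C m) (hAB : A ≠ B) (hAC : A ≠ C) (hDC : H.SameSide l D C)
    (hDB : H.SameSide m D B) : H.angle B A D + H.angle D A C = H.angle B A C :=
  H.angle_add A B C D hAB hAC (fun h => hDC.1 (h ▸ hAl))
    (fun _ hAn hBn => line_eq_of_onLine hAB hAl hBl hAn hBn ▸ hDC)
    (fun _ hAn hCn => line_eq_of_onLine hAC hAm hCm hAn hCn ▸ hDB)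

/-- The hypotheses say that `E` lies inside the angle `∠BAD`. By Pasch's axiom in the triangle
`BCD` the line `AE` crosses `BD` or `CD`; a crossing `Z` of `CD` would lie on the ray `AE`,
hence on `B`'s side of `AD`, while it is on `C`'s side. -/
theorem sameSide_of_insideAngle (hBAC : H.btw B A C) (hBl : H.onLine B l)
    (hCl : H.onLine C l) (hDE : H.SameSide l D E) (hAk : H.onLine A k) (hDk : H.onLine D k)
    (hEk : ¬ H.onLine E k) (hEB : H.SameSide k E B) (hAe : H.onLine A e)
    (hEe : H.onLine E e) : H.SameSide e D C := by
  have hAl := hBAC.onLine_mid hBl hCl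
  have hle : l ≠ e := fun h => hDE.2.1 (h ▸ hEe)
  have hlk : l ≠ k := fun h => hDE.1 (h ▸ hDk)
  have hke : k ≠ e := fun h => hEk (h ▸ hEe)
  have hBe := not_onLine_of_ne hle hAl hAe hBl hBAC.left_ne
  have hCe := not_onLine_of_ne hle hAl hAe hCl hBAC.ne_right.symm
  have hDe := not_onLine_of_ne hke hAk hAe hDk fun h => hDE.1 (h ▸ hAl)
  have hCk := not_onLine_of_ne hlk hAl hAk hCl hBAC.ne_right.symm
  have hBC : H.OppSide e B C := ⟨hBe, hCe, A, hAe, hBAC⟩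
  rcases H.pasch B C D e (noncollinear_of_not_onLine_right hBl hCl hBAC.left_ne_right hDE.1)
    hBe hCe hDe ⟨A, hAe, hBAC⟩ with hBD | ⟨Z, hZe, hCZD⟩
  · exact (OppSide.symm ⟨hBe, hDe, hBD⟩).trans hBC
  have hEZ : H.SameSide l E Z := hDE.symm.trans (sameSide_of_btw hCl hDE.1 hCZD).symm
  have hZ : H.SameSide k E Z := sameSide_of_onRay hAk hEk (onRay_of_sameSide hAl hAe hEe hZe hEZ)
  have hBC' : H.SameSide k B C := hEB.symm.trans (hZ.trans (sameSide_of_btw hDk hCk hCZD.symm))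
  exact (hBC'.2.2 ⟨A, hAk, hBAC⟩).elim

theorem angle_add_angle_of_insideAngle (hBAC : H.btw B A C) (hBl : H.onLine B l)
    (hCl : H.onLine C l) (hDE : H.SameSide l D E) (hAk : H.onLine A k) (hDk : H.onLine D k)
    (hEk : ¬ H.onLine E k) (hEB : H.SameSide k E B) :
    H.angle B A E + H.angle E A D = H.angle B A D ∧
      H.angle E A D + H.angle D A C = H.angle E A C := by
  have hAl := hBAC.onLine_mid hBl hCl
  have hAD : A ≠ D := fun h => hDE.1 (h ▸ hAl)
  have hAE : A ≠ E := fun h => hDE.2.1 (h ▸ hAl)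
  obtain ⟨e, hAe, hEe⟩ := H.line_exists A E hAE
  exact ⟨angle_add_of_sameSide hAl hBl hAk hDk hBAC.left_ne.symm hAD hDE.symm hEB,
    angle_add_of_sameSide hAe hEe hAl hCl hAE hBAC.ne_right
      (sameSide_of_insideAngle hBAC hBl hCl hDE hAk hDk hEk hEB hAe hEe) hDE⟩

theorem sameSide_or_sameSide_of_btw (hBAC : H.btw B A C) (hAk : H.onLine A k)
    (hBk : ¬ H.onLine B k) (hCk : ¬ H.onLine C k) (hEk : ¬ H.onLine E k) :
    H.SameSide k E B ∨ H.SameSide k E C :=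
  (sameSide_or_oppSide hEk hBk).imp_right fun h => h.trans ⟨hBk, hCk, A, hAk, hBAC⟩

theorem angle_add_angle_eq_of_sameSide (hBAC : H.btw B A C) (hBl : H.onLine B l)
    (hCl : H.onLine C l) (hDE : H.SameSide l D E) :
    H.angle B A D + H.angle D A C = H.angle B A E + H.angle E A C := by
  have hAl := hBAC.onLine_mid hBl hCl
  obtain ⟨k, hAk, hDk⟩ := H.line_exists A D fun h => hDE.1 (h ▸ hAl)
  have hlk : l ≠ k := fun h => hDE.1 (h ▸ hDk)
  by_cases hEk : H.onLine E k
  · have hray := onRay_of_sameSide hAl hAk hDk hEk hDE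
    rw [angle_eq_of_onRay_right (B := B) hray, H.angle_symm D A C, H.angle_symm E A C,
      angle_eq_of_onRay_right (B := C) hray]
  rcases sameSide_or_sameSide_of_btw hBAC hAk (not_onLine_of_ne hlk hAl hAk hBl hBAC.left_ne)
    (not_onLine_of_ne hlk hAl hAk hCl hBAC.ne_right.symm) hEk with hEB | hEC
  · obtain ⟨h₁, h₂⟩ := angle_add_angle_of_insideAngle hBAC hBl hCl hDE hAk hDk hEk hEB
    linarith
  · obtain ⟨h₁, h₂⟩ := angle_add_angle_of_insideAngle hBAC.symm hCl hBl hDE hAk hDk hEk hEC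
    linarith [H.angle_symm B A D, H.angle_symm C A D, H.angle_symm B A E, H.angle_symm C A E]

/-- The straight angle cannot be split by `angle_add`. Instead, the sum `S` does not depend on
the ray `AD`, and comparing it with rays `AE` at every prescribed angle `θ` to `AB` gives
`θ < S ≤ θ + π` for all `0 < θ < π`. -/
theorem angle_add_angle_eq_pi (hBAC : H.btw B A C) (hBl : H.onLine B l) (hCl : H.onLine C l)
    (hD : ¬ H.onLine D l) : H.angle B A D + H.angle D A C = Real.pi := by
  have hAl := hBAC.onLine_mid hBl hCl
  have hAD : A ≠ D := fun h => hD (h ▸ hAl)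
  have key : ∀ θ, 0 < θ → θ < Real.pi →
      θ < H.angle B A D + H.angle D A C ∧ H.angle B A D + H.angle D A C ≤ θ + Real.pi := by
    intro θ hθ hθπ
    obtain ⟨E, hEl, hED, hEAB⟩ :=
      H.angle_construct θ hθ hθπ A B D l hBAC.left_ne.symm hAl hBl hD
    have hsum := angle_add_angle_eq_of_sameSide hBAC hBl hCl
      ⟨hD, hEl, fun ⟨Z, hZl, hDZE⟩ => hED ⟨Z, hZl, hDZE.symm⟩⟩
    have hpos := angle_pos_of_not_onLine hAl hCl hBAC.ne_right hEl
    have hle := (H.angle_mem E A C (fun h => hEl (h ▸ hAl)) hBAC.ne_right.symm).2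
    constructor <;> linarith [H.angle_symm B A E]
  have h₁ := H.angle_mem B A D hBAC.left_ne hAD.symm
  have h₂ := H.angle_mem D A C hAD.symm hBAC.ne_right.symm
  apply le_antisymm
  · by_contra! h
    linarith [(key ((H.angle B A D + H.angle D A C - Real.pi) / 2) (by linarith)
      (by linarith [h₁.2, h₂.2])).2]
  · by_contra! h
    linarith [(key ((H.angle B A D + H.angle D A C + Real.pi) / 2) (by linarith [h₁.1, h₂.1])
      (by linarith)).1]

theorem angle_vertical (hBAC : H.btw B A C) (hDAE : H.btw D A E) (hBl : H.onLine B l)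
    (hCl : H.onLine C l) (hD : ¬ H.onLine D l) : H.angle B A D = H.angle C A E := by
  have hAl := hBAC.onLine_mid hBl hCl
  obtain ⟨k, hDk, hAk⟩ := H.line_exists D A hDAE.left_ne
  have hCk := not_onLine_of_ne (fun h : l = k => hD (h ▸ hDk)) hAl hAk hCl hBAC.ne_right.symm
  linarith [angle_add_angle_eq_pi hBAC hBl hCl hD,
    angle_add_angle_eq_pi hDAE hDk (hDAE.onLine_right hDk hAk) hCk]

theorem onRay_of_angle_eq (hAl : H.onLine A l) (hBl : H.onLine B l) (hAB : A ≠ B)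
    (hDE : H.SameSide l D E) (h : H.angle B A D = H.angle B A E) : H.OnRay A D E := by
  obtain ⟨C, hBAC⟩ := H.btw_extend B A hAB.symm
  have hCl := hBAC.onLine_right hBl hAl
  obtain ⟨k, hAk, hDk⟩ := H.line_exists A D fun h => hDE.1 (h ▸ hAl)
  have hlk : l ≠ k := fun h => hDE.1 (h ▸ hDk)
  by_cases hEk : H.onLine E k
  · exact onRay_of_sameSide hAl hAk hDk hEk hDE
  have hpos := angle_pos_of_not_onLine hAk hDk (fun h => hDE.1 (h ▸ hAl)) hEk
  rcases sameSide_or_sameSide_of_btw hBAC hAk (not_onLine_of_ne hlk hAl hAk hBl hAB.symm)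
    (not_onLine_of_ne hlk hAl hAk hCl hBAC.ne_right.symm) hEk with hEB | hEC
  · linarith [(angle_add_angle_of_insideAngle hBAC hBl hCl hDE hAk hDk hEk hEB).1]
  · linarith [(angle_add_angle_of_insideAngle hBAC.symm hCl hBl hDE hAk hDk hEk hEC).1,
      angle_add_angle_eq_pi hBAC hBl hCl hDE.1, angle_add_angle_eq_pi hBAC hBl hCl hDE.2.1,
      H.angle_symm C A D, H.angle_symm C A E]

/-- Euclid I.16. With `E` the midpoint of `AC` and `F` the reflection of `B` in `E`, SAS gives
`∠EAB = ∠ECF`, and `F` lies inside the exterior angle `∠ACD`. -/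
theorem angle_lt_angle_of_btw (hBl : H.onLine B l) (hCl : H.onLine C l) (hA : ¬ H.onLine A l)
    (hBCD : H.btw B C D) : H.angle C A B < H.angle A C D := by
  have hAC : A ≠ C := fun h => hA (h ▸ hCl)
  have hDl := hBCD.onLine_right hBl hCl
  obtain ⟨E, hAEC, hAE⟩ := exists_midpoint hAC
  obtain ⟨m, hAm, hCm⟩ := H.line_exists A C hAC
  have hlm : l ≠ m := fun h => hA (h ▸ hAm)
  have hEm := hAEC.onLine_mid hAm hCm
  have hBm := not_onLine_of_ne hlm hCl hCm hBl hBCD.left_ne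
  have hDm := not_onLine_of_ne hlm hCl hCm hDl hBCD.ne_right.symm
  have hEl := not_onLine_of_ne hlm.symm hCm hCl hEm hAEC.ne_right
  have hBE : B ≠ E := fun h => hBm (h ▸ hEm)
  obtain ⟨F, hBEF, hEF⟩ := exists_btw_dist_eq hBE (H.dist_pos E B hBE.symm)
  obtain ⟨n, hBn, hEn⟩ := H.line_exists B E hBE
  have hFn := hBEF.onLine_right hBn hEn
  have hFm := not_onLine_of_ne (fun h : n = m => hBm (h ▸ hBn)) hEn hEm hFn hBEF.ne_right.symm
  have hFl := not_onLine_of_ne (fun h : n = l => hEl (h ▸ hEn)) hBn hBl hFn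
    hBEF.left_ne_right.symm
  have hsas := (H.sas E A B E C F
    (noncollinear_of_not_onLine_right hEm hAm hAEC.left_ne.symm hBm)
    (noncollinear_of_not_onLine_right hEm hCm hAEC.ne_right hFm)
    (by rw [H.dist_symm E A, hAE]) hEF.symm (angle_vertical hAEC hBEF hAm hCm hBm)).2.1
  have hFD : H.SameSide m F D :=
    (OppSide.symm ⟨hBm, hFm, E, hEm, hBEF⟩).trans ⟨hBm, hDm, C, hCm, hBCD⟩
  have hFA : H.SameSide l F A :=
    (sameSide_of_btw hBl hFl hBEF).symm.trans (sameSide_of_btw hCl hA hAEC.symm)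
  have hadd := angle_add_of_sameSide hCm hAm hCl hDl hAC.symm hBCD.ne_right hFD hFA
  have hpos := angle_pos_of_not_onLine hCl hDl hBCD.ne_right hFl
  have hA' : H.angle C A B = H.angle E A B := angle_eq_of_onRay_left (Or.inr (Or.inl hAEC))
  have hC' : H.angle A C F = H.angle E C F := angle_eq_of_onRay_left (Or.inr (Or.inl hAEC.symm))
  linarith

theorem angle_add_angle_lt_pi (hBl : H.onLine B l) (hCl : H.onLine C l) (hBC : B ≠ C)
    (hA : ¬ H.onLine A l) : H.angle A B C + H.angle A C B < Real.pi := by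
  have hAC : A ≠ C := fun h => hA (h ▸ hCl)
  obtain ⟨D, hBCD⟩ := H.btw_extend B C hBC
  obtain ⟨D', hACD'⟩ := H.btw_extend A C hAC
  obtain ⟨m, hAm, hCm⟩ := H.line_exists A C hAC
  have hBm := not_onLine_of_ne (fun h : l = m => hA (h ▸ hAm)) hCl hCm hBl hBC
  linarith [angle_lt_angle_of_btw hAm hCm hBm hACD',
    angle_vertical hACD'.symm hBCD (hACD'.onLine_right hAm hCm) hAm hBm,
    angle_add_angle_eq_pi hBCD hBl (hBCD.onLine_right hBl hCl) hA,
    H.angle_symm A B C, H.angle_symm B C D', H.angle_symm A C B]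

section Transversal

variable (hAc : H.onLine A c) (hBc : H.onLine B c) (hAB : A ≠ B) (hAa : H.onLine A a)
  (hBb : H.onLine B b) (hPa : H.onLine P a) (hQb : H.onLine Q b)
include hAc hBc hAB hAa hBb hPa hQb

theorem not_onLine_of_onLine_of_onLine (hPc : ¬ H.onLine P c) (hQc : ¬ H.onLine Q c)
    (hXa : H.onLine X a) (hXb : H.onLine X b) : ¬ H.onLine X c := fun hXc => hAB <|
  (eq_of_onLine_of_ne (fun h : c = a => hPc (h ▸ hPa)) hAc hAa hXc hXa).trans
    (eq_of_onLine_of_ne (fun h : c = b => hQc (h ▸ hQb)) hXc hXb hBc hBb)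

theorem angle_add_angle_lt_pi_of_sameSide (hXa : H.onLine X a) (hXb : H.onLine X b)
    (hXP : H.SameSide c X P) (hXQ : H.SameSide c X Q) :
    H.angle P A B + H.angle Q B A < Real.pi := by
  rw [← angle_eq_of_onRay_left (onRay_of_sameSide hAc hAa hXa hPa hXP),
    ← angle_eq_of_onRay_left (onRay_of_sameSide hBc hBb hXb hQb hXQ)]
  exact angle_add_angle_lt_pi hAc hBc hAB hXP.1

theorem pi_lt_angle_add_angle_of_oppSide (hXa : H.onLine X a) (hXb : H.onLine X b)
    (hXP : H.OppSide c X P) (hPQ : H.SameSide c P Q) :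
    Real.pi < H.angle P A B + H.angle Q B A := by
  have hca : c ≠ a := fun h => hPQ.1 (h ▸ hPa)
  have hcb : c ≠ b := fun h => hPQ.2.1 (h ▸ hQb)
  have hXQ : H.OppSide c X Q := (hPQ.symm.trans_oppSide hXP.symm).symm
  linarith [angle_add_angle_lt_pi hAc hBc hAB hXP.1,
    angle_add_angle_eq_pi (btw_of_exists_btw hca hAc hAa hXa hPa hXP.2.2) hXa hPa
      (not_onLine_of_ne hca hAc hAa hBc hAB.symm),
    angle_add_angle_eq_pi (btw_of_exists_btw hcb hBc hBb hXb hQb hXQ.2.2) hXb hQb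
      (not_onLine_of_ne hcb hBc hBb hAc hAB),
    H.angle_symm B A P, H.angle_symm A B Q]

theorem not_linesMeet_of_angle_add_angle_eq_pi (hPQ : H.SameSide c P Q)
    (h : H.angle P A B + H.angle Q B A = Real.pi) : ¬ H.LinesMeet a b := by
  rintro ⟨X, hXa, hXb⟩
  have hXc := not_onLine_of_onLine_of_onLine hAc hBc hAB hAa hBb hPa hQb hPQ.1 hPQ.2.1 hXa hXb
  rcases sameSide_or_oppSide hXc hPQ.1 with hXP | hXP
  · exact (angle_add_angle_lt_pi_of_sameSide hAc hBc hAB hAa hBb hPa hQb hXa hXb hXP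
      (hXP.trans hPQ)).ne h
  · exact (pi_lt_angle_add_angle_of_oppSide hAc hBc hAB hAa hBb hPa hQb hXa hXb hXP hPQ).ne' h

end Transversal

theorem exists_btw_sameSide (hAc : H.onLine A c) (hAm : H.onLine A m) (hcm : c ≠ m)
    (hQ : ¬ H.onLine Q c) :
    ∃ P P', H.onLine P m ∧ H.onLine P' m ∧ H.btw P A P' ∧ H.SameSide c P Q := by
  obtain ⟨P, hPm, hPA⟩ := exists_onLine_ne m A
  obtain ⟨P', hPAP'⟩ := H.btw_extend P A hPA
  have hP'm := hPAP'.onLine_right hPm hAm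
  have hPc := not_onLine_of_ne hcm.symm hAm hAc hPm hPA
  have hP'c := not_onLine_of_ne hcm.symm hAm hAc hP'm hPAP'.ne_right.symm
  rcases sameSide_or_oppSide hPc hQ with hPQ | hPQ
  · exact ⟨P, P', hPm, hP'm, hPAP', hPQ⟩
  · exact ⟨P', P, hP'm, hPm, hPAP'.symm, OppSide.trans ⟨hP'c, hPc, A, hAc, hPAP'.symm⟩ hPQ⟩

theorem angle_add_angle_eq_pi_of_not_linesMeet (hE : H.EuclidFifth) (hAc : H.onLine A c)
    (hBc : H.onLine B c) (hAB : A ≠ B) (hAm : H.onLine A m) (hBl : H.onLine B l)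
    (hQl : H.onLine Q l) (hQc : ¬ H.onLine Q c) (hml : ¬ H.LinesMeet m l) :
    ∃ P, H.onLine P m ∧ H.SameSide c P Q ∧ H.angle P A B + H.angle Q B A = Real.pi := by
  have hle : ∀ P Q, H.onLine P m → H.onLine Q l → H.SameSide c P Q →
      Real.pi ≤ H.angle P A B + H.angle Q B A := fun P Q hPm hQl hPQ => le_of_not_gt fun h =>
    let ⟨X, hXm, hXl, _⟩ := hE m l c A B P Q hAB hAm hAc hBl hBc hPm hQl hPQ h
    hml ⟨X, hXm, hXl⟩
  have hcm : c ≠ m := fun h => hml ⟨B, h ▸ hBc, hBl⟩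
  have hlc : l ≠ c := fun h => hQc (h ▸ hQl)
  obtain ⟨P, P', hPm, hP'm, hPAP', hPQ⟩ := exists_btw_sameSide hAc hAm hcm hQc
  obtain ⟨Q', hQBQ'⟩ := H.btw_extend Q B fun h => hQc (h ▸ hBc)
  have hQ'l := hQBQ'.onLine_right hQl hBl
  have hP'c := not_onLine_of_ne hcm.symm hAm hAc hP'm hPAP'.ne_right.symm
  have hQ'c := not_onLine_of_ne hlc hBl hBc hQ'l hQBQ'.ne_right.symm
  have hP'Q' : H.SameSide c P' Q' :=
    (hPQ.symm.trans_oppSide ⟨hPQ.1, hP'c, A, hAc, hPAP'⟩).symm.trans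
      ⟨hQc, hQ'c, B, hBc, hQBQ'⟩
  refine ⟨P, hPm, hPQ, le_antisymm ?_ (hle P Q hPm hQl hPQ)⟩
  linarith [hle P' Q' hP'm hQ'l hP'Q',
    angle_add_angle_eq_pi hPAP' hPm hP'm fun h => hml ⟨B, h, hBl⟩,
    angle_add_angle_eq_pi hQBQ' hQl hQ'l fun h => hml ⟨A, hAm, h⟩,
    H.angle_symm B A P', H.angle_symm A B Q']

theorem playfairAx_of_euclidFifth (hE : H.EuclidFifth) : H.PlayfairAx := by
  intro l A hA m n hAm hAn hml hnl
  obtain ⟨B, Q, hBQ, hBl, hQl⟩ := H.line_two_points l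
  have hAB : A ≠ B := fun h => hA (h ▸ hBl)
  obtain ⟨c, hAc, hBc⟩ := H.line_exists A B hAB
  have hQc := not_onLine_of_ne (fun h : l = c => hA (h ▸ hAc)) hBl hBc hQl hBQ.symm
  obtain ⟨P, hPm, hPQ, hP⟩ :=
    angle_add_angle_eq_pi_of_not_linesMeet hE hAc hBc hAB hAm hBl hQl hQc hml
  obtain ⟨R, hRn, hRQ, hR⟩ :=
    angle_add_angle_eq_pi_of_not_linesMeet hE hAc hBc hAB hAn hBl hQl hQc hnl
  have hPR : H.OnRay A P R := onRay_of_angle_eq hAc hBc hAB (hPQ.trans hRQ.symm)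
    (by linarith [H.angle_symm B A P, H.angle_symm B A R])
  exact line_eq_of_onLine (fun h : A = R => hRQ.1 (h ▸ hAc)) hAm (hPR.onLine hAm hPm) hAn hRn

theorem euclidFifth_of_playfairAx (hP : H.PlayfairAx) : H.EuclidFifth := by
  intro a b c A B P Q hAB hAa hAc hBb hBc hPa hQb hPQ hlt
  have hPAB := angle_pos_of_not_onLine hAc hBc hAB hPQ.1
  have hQBA := angle_pos_of_not_onLine hBc hAc hAB.symm hPQ.2.1
  obtain ⟨R, hRc, hRP, hRAB⟩ := H.angle_construct (Real.pi - H.angle Q B A) (by linarith)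
    (by linarith) A B P c hAB hAc hBc hPQ.1
  have hRP : H.SameSide c R P := ⟨hRc, hPQ.1, hRP⟩
  obtain ⟨m, hAm, hRm⟩ := H.line_exists A R fun h => hRc (h ▸ hAc)
  have hmb : ¬ H.LinesMeet m b := not_linesMeet_of_angle_add_angle_eq_pi hAc hBc hAB hAm hBb
    hRm hQb (hRP.trans hPQ) (by linarith)
  have ham : a ≠ m := by
    rintro rfl
    linarith [angle_eq_of_onRay_left (C := B) (onRay_of_sameSide hAc hAa hRm hPa hRP)]
  have hcb : c ≠ b := fun h => hPQ.2.1 (h ▸ hQb)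
  obtain ⟨X, hXa, hXb⟩ : H.LinesMeet a b := by_contra fun hab =>
    ham (hP b A (not_onLine_of_ne hcb hBc hBb hAc hAB) a m hAa hAm hab hmb)
  have hXc := not_onLine_of_onLine_of_onLine hAc hBc hAB hAa hBb hPa hQb hPQ.1 hPQ.2.1 hXa hXb
  refine ⟨X, hXa, hXb, (sameSide_or_oppSide hXc hPQ.1).resolve_right fun hXP => ?_⟩
  linarith [pi_lt_angle_add_angle_of_oppSide hAc hBc hAB hAa hBb hPa hQb hXa hXb hXP hPQ]

end HilbertPlane

/-- In any Hilbert plane, Playfair's axiom is equivalent to Euclid's Fifth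
Postulate. -/
theorem playfair_iff_euclidFifth (H : HilbertPlane) :
    H.PlayfairAx ↔ H.EuclidFifth :=
  ⟨HilbertPlane.euclidFifth_of_playfairAx, HilbertPlane.playfairAx_of_euclidFifth⟩
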